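/- arXiv:1410.4645 — 3 statements merged into one kernel-verified Lean document; each statement's English description precedes it below -/
import Mathlib

section
/- Let G be a countable discrete group acting continuously on a compact metric space (X,d) and let {F_n} be a sequence of finite subsets of G satisfying lim_{n→∞} |F_n|/log n = ∞. Then for any Z ⊆ X and any s, ε, δ > 0, there exists N₀ ∈ ℕ such that for all N ≥ N₀, M(Z,N,6ε,s+δ,{F_n}) ≤ W(Z,N,ε,s,{F_n}). -/
open Filter Set MeasureTheory Topology ENNReal Pointwise

variable {G X : Type*}

section Defs

variable [Group G] [MetricSpace X] [MulAction G X]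

/-- The Bowen ball `B_F(x,ε) = {y : d(gx,gy) < ε for all g ∈ F}`. -/
def bowenBall (F : Finset G) (x : X) (ε : ℝ) : Set X :=
  {y : X | ∀ g ∈ F, dist (g • x) (g • y) < ε}

/-- A Følner sequence: `|F_n ∆ gF_n|/|F_n| → 0` for every `g ∈ G`. -/
def IsFolnerSeq (F : ℕ → Finset G) : Prop :=
  ∀ g : G, Tendsto
    (fun n => ((symmDiff (F n : Set G) ((g * ·) '' (F n : Set G))).ncard : ℝ) / (F n).card)
    atTop (𝓝 0)

/-- A tempered sequence: `|⋃_{k<n} F_k⁻¹ F_n| ≤ C |F_n|` for all `n`. -/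
def IsTemperedSeq (F : ℕ → Finset G) : Prop :=
  ∃ C : ℝ, 0 < C ∧ ∀ n : ℕ,
    ((⋃ k ∈ Finset.range n, ((F k : Set G)⁻¹ * (F n : Set G))).ncard : ℝ) ≤ C * (F n).card

/-- The growth condition `lim_n |F_n| / log n = ∞`. -/
def GrowthCond (F : ℕ → Finset G) : Prop :=
  Tendsto (fun n : ℕ => ((F n).card : ℝ) / Real.log n) atTop atTop

/-- `M(Z,N,ε,s,{F_n})`: infimum of `∑ exp(-s |F_{n_i}|)` over countable families of Bowen
balls `B_{F_{n_i}}(x_i,ε)`, `n_i ≥ N`, covering `Z`. -/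
noncomputable def ballM (F : ℕ → Finset G) (Z : Set X) (N : ℕ) (ε s : ℝ) : ℝ≥0∞ :=
  ⨅ (I : Set (X × ℕ)) (_ : I.Countable) (_ : ∀ p ∈ I, N ≤ p.2)
    (_ : Z ⊆ ⋃ p ∈ I, bowenBall (F p.2) p.1 ε),
    ∑' p : I, ENNReal.ofReal (Real.exp (-s * ((F (p : X × ℕ).2).card : ℝ)))

/-- `M(Z,ε,s,{F_n}) = lim_{N→∞} M(Z,N,ε,s,{F_n})` (the quantity is nondecreasing in `N`). -/
noncomputable def ballMN (F : ℕ → Finset G) (Z : Set X) (ε s : ℝ) : ℝ≥0∞ :=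
  ⨆ N : ℕ, ballM F Z N ε s

/-- `M(Z,s,{F_n}) = lim_{ε→0} M(Z,ε,s,{F_n})` (the quantity is nondecreasing as `ε` decreases). -/
noncomputable def ballMtot (F : ℕ → Finset G) (Z : Set X) (s : ℝ) : ℝ≥0∞ :=
  ⨆ (ε : ℝ) (_ : 0 < ε), ballMN F Z ε s

/-- The Bowen topological entropy of `Z` along `{F_n}`: the critical value of `s` at which
`M(Z,s,{F_n})` jumps from `+∞` to `0`, i.e. `inf {s : M(Z,s,{F_n}) = 0}`. -/
noncomputable def bowenEnt (F : ℕ → Finset G) (Z : Set X) : ℝ≥0∞ :=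
  ⨅ (s : ℝ) (_ : ballMtot F Z s = 0), ENNReal.ofReal s

/-- The weighted quantity `W(f,N,ε,s,{F_n})`. -/
noncomputable def wtW (F : ℕ → Finset G) (f : X → ℝ≥0∞) (N : ℕ) (ε s : ℝ) : ℝ≥0∞ :=
  ⨅ (I : Set (X × ℕ)) (c : X × ℕ → ℝ≥0∞) (_ : I.Countable)
    (_ : ∀ p ∈ I, N ≤ p.2 ∧ 0 < c p ∧ c p < ⊤)
    (_ : ∀ x : X, f x ≤ ∑' p : I, c (p : X × ℕ) *
        (bowenBall (F (p : X × ℕ).2) (p : X × ℕ).1 ε).indicator (fun _ => (1 : ℝ≥0∞)) x),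
    ∑' p : I, c (p : X × ℕ) * ENNReal.ofReal (Real.exp (-s * ((F (p : X × ℕ).2).card : ℝ)))

/-- `W(Z,N,ε,s,{F_n}) = W(χ_Z,N,ε,s,{F_n})`. -/
noncomputable def wtWset (F : ℕ → Finset G) (Z : Set X) (N : ℕ) (ε s : ℝ) : ℝ≥0∞ :=
  wtW F (Z.indicator fun _ => (1 : ℝ≥0∞)) N ε s

/-- `W(Z,ε,s,{F_n}) = lim_{N→∞} W(Z,N,ε,s,{F_n})`. -/
noncomputable def wtWN (F : ℕ → Finset G) (Z : Set X) (ε s : ℝ) : ℝ≥0∞ :=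
  ⨆ N : ℕ, wtWset F Z N ε s

/-- `W(Z,s,{F_n}) = lim_{ε→0} W(Z,ε,s,{F_n})`. -/
noncomputable def wtWtot (F : ℕ → Finset G) (Z : Set X) (s : ℝ) : ℝ≥0∞ :=
  ⨆ (ε : ℝ) (_ : 0 < ε), wtWN F Z ε s

/-- The weighted Bowen topological entropy of `Z` along `{F_n}`. -/
noncomputable def wtBowenEnt (F : ℕ → Finset G) (Z : Set X) : ℝ≥0∞ :=
  ⨅ (s : ℝ) (_ : wtWtot F Z s = 0), ENNReal.ofReal s

/-- A finite open cover of `X`. -/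
def IsFinOpenCover (𝒰 : Finset (Set X)) : Prop :=
  (∀ U ∈ 𝒰, IsOpen U) ∧ ⋃₀ (𝒰 : Set (Set X)) = Set.univ

/-- `N(⋁_{g∈F} g⁻¹𝒰)`: the minimal cardinality of a subcover of the refined cover, whose members
are the sets `X(𝐔) = ⋂_{g∈F} g⁻¹ U_g` with `U_g ∈ 𝒰`. -/
noncomputable def coverNum (𝒰 : Finset (Set X)) (F : Finset G) : ℕ :=
  sInf {k : ℕ | ∃ Λ : Finset (G → Set X), Λ.card = k ∧
    (∀ u ∈ Λ, ∀ g ∈ F, u g ∈ 𝒰) ∧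
    (⋃ u ∈ Λ, ⋂ g ∈ F, (fun y => g • y) ⁻¹' u g) = Set.univ}

/-- `h_top(G,𝒰) = lim_n (1/|F_n|) log N(⋁_{g∈F_n} g⁻¹𝒰)` (the limit exists by Ornstein–Weiss,
hence equals the `limsup`). -/
noncomputable def coverTopEnt (F : ℕ → Finset G) (𝒰 : Finset (Set X)) : ℝ :=
  limsup (fun n => Real.log (coverNum 𝒰 (F n)) / (F n).card) atTop

/-- The topological entropy `h_top(X,G)`, the supremum over finite open covers. -/
noncomputable def topEnt (X : Type*) [MetricSpace X] [MulAction G X] (F : ℕ → Finset G) : ℝ≥0∞ :=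
  ⨆ (𝒰 : Finset (Set X)) (_ : IsFinOpenCover 𝒰), ENNReal.ofReal (coverTopEnt F 𝒰)

/-- `M(Z,𝒰,N,s,{F_n})`: infimum of `∑_{𝐔∈Λ} exp(-s m(𝐔))` over collections
`Λ ⊆ ⋃_{j≥N} 𝒲_{F_j}(𝒰)` covering `Z`; an element `𝐔 ∈ 𝒲_{F_j}(𝒰)` is encoded as a pair
`(j, u)` with `u g ∈ 𝒰` for `g ∈ F_j` (and `u g = ∅` elsewhere), `X(𝐔) = ⋂_{g∈F_j} g⁻¹ (u g)`
and `m(𝐔) = |F_j|`. -/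
noncomputable def covM (F : ℕ → Finset G) (𝒰 : Finset (Set X)) (Z : Set X) (N : ℕ) (s : ℝ) :
    ℝ≥0∞ :=
  ⨅ (Λ : Set (ℕ × (G → Set X)))
    (_ : ∀ p ∈ Λ, N ≤ p.1 ∧ (∀ g ∈ F p.1, p.2 g ∈ 𝒰) ∧ (∀ g ∉ F p.1, p.2 g = ∅))
    (_ : Z ⊆ ⋃ p ∈ Λ, ⋂ g ∈ F p.1, (fun y => g • y) ⁻¹' p.2 g),
    ∑' p : Λ, ENNReal.ofReal (Real.exp (-s * ((F (p : ℕ × (G → Set X)).1).card : ℝ)))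

/-- `M(Z,𝒰,s,{F_n}) = lim_{N→∞} M(Z,𝒰,N,s,{F_n})`. -/
noncomputable def covMtot (F : ℕ → Finset G) (𝒰 : Finset (Set X)) (Z : Set X) (s : ℝ) : ℝ≥0∞ :=
  ⨆ N : ℕ, covM F 𝒰 Z N s

/-- The cover-based Bowen topological entropy `h^B_top(𝒰,Z,{F_n}) = inf {s : M(Z,𝒰,s,{F_n}) = 0}`. -/
noncomputable def covBowenEnt (F : ℕ → Finset G) (𝒰 : Finset (Set X)) (Z : Set X) : ℝ≥0∞ :=
  ⨅ (s : ℝ) (_ : covMtot F 𝒰 Z s = 0), ENNReal.ofReal s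

/-- `diam(𝒰) = max {diam U : U ∈ 𝒰}`. -/
noncomputable def coverDiam (𝒰 : Finset (Set X)) : ℝ≥0∞ :=
  ⨆ U ∈ 𝒰, EMetric.diam U

end Defs

section MeasureDefs

variable [Group G] [MetricSpace X] [MulAction G X] [MeasurableSpace X]

/-- The quantity `-(1/m) log μ(B)`, with value `+∞` when `μ B = 0`. -/
noncomputable def locTerm (μ : Measure X) (B : Set X) (m : ℕ) : ℝ≥0∞ :=
  if μ B = 0 then ⊤ else ENNReal.ofReal (-(Real.log ((μ B).toReal)) / (m : ℝ))

/-- The lower local entropy `h̲_μ^{loc}(x,ε,{F_n}) = liminf_n -(1/|F_n|) log μ(B_{F_n}(x,ε))`. -/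
noncomputable def lowLoc (μ : Measure X) (F : ℕ → Finset G) (x : X) (ε : ℝ) : ℝ≥0∞ :=
  liminf (fun n => locTerm μ (bowenBall (F n) x ε) (F n).card) atTop

/-- The upper local entropy `limsup_n -(1/|F_n|) log μ(B_{F_n}(x,ε))`. -/
noncomputable def upLoc (μ : Measure X) (F : ℕ → Finset G) (x : X) (ε : ℝ) : ℝ≥0∞ :=
  limsup (fun n => locTerm μ (bowenBall (F n) x ε) (F n).card) atTop

/-- `h̲_μ^{loc}(x,{F_n}) = lim_{ε→0} h̲_μ^{loc}(x,ε,{F_n})` (a monotone limit, i.e. the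
supremum over `ε > 0`). -/
noncomputable def lowLocPt (μ : Measure X) (F : ℕ → Finset G) (x : X) : ℝ≥0∞ :=
  ⨆ (ε : ℝ) (_ : 0 < ε), lowLoc μ F x ε

/-- `h̲_μ^{loc}({F_n}) = ∫_X h̲_μ^{loc}(x,{F_n}) dμ(x)`. -/
noncomputable def lowLocEnt (μ : Measure X) (F : ℕ → Finset G) : ℝ≥0∞ :=
  ∫⁻ x, lowLocPt μ F x ∂μ

/-- A finite measurable partition of `X`, presented as `P : Fin k → Set X`. -/
def IsMeasPartition {k : ℕ} (P : Fin k → Set X) : Prop :=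
  (∀ i, MeasurableSet (P i)) ∧ Pairwise (Function.onFun Disjoint P) ∧ (⋃ i, P i) = Set.univ

/-- The static entropy `H_μ(𝒫_F)` of the join `𝒫_F = ⋁_{g∈F} g⁻¹𝒫`; its atoms are the
nonempty sets `⋂_{g∈F} g⁻¹ P(u g)` (distinct choices `u` yield disjoint atoms, and empty
atoms contribute `0`). -/
noncomputable def partH (μ : Measure X) {k : ℕ} (P : Fin k → Set X) (F : Finset G) : ℝ :=
  letI := Classical.decEq G
  ∑ u : (↥F → Fin k),
    Real.negMulLog ((μ (⋂ g : ↥F, (fun y => (g : G) • y) ⁻¹' P (u g))).toReal)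

/-- `h_μ(G,𝒫) = liminf_n (1/|F_n|) H_μ(𝒫_{F_n})`. -/
noncomputable def partEnt (μ : Measure X) (F : ℕ → Finset G) {k : ℕ} (P : Fin k → Set X) : ℝ :=
  liminf (fun n => partH μ P (F n) / (F n).card) atTop

/-- The measure-theoretic entropy `h_μ(X,G) = sup_𝒫 h_μ(G,𝒫)` (it is independent of the
Følner sequence used to compute it). -/
noncomputable def measEnt (μ : Measure X) (F : ℕ → Finset G) : ℝ≥0∞ :=
  ⨆ (k : ℕ) (P : Fin k → Set X) (_ : IsMeasPartition P), ENNReal.ofReal (partEnt μ F P)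

/-- Ergodicity of the `G`-action w.r.t. `μ`. -/
def IsErgodicGAction (G : Type*) [Group G] [MulAction G X] (μ : Measure X) : Prop :=
  ∀ A : Set X, MeasurableSet A → (∀ g : G, (g • ·) ⁻¹' A = A) → μ A = 0 ∨ μ A = 1

end MeasureDefs

/-!
Take a weighted cover `∑ cᵢ χ_{B_{F_{nᵢ}}(xᵢ,ε)} ≥ χ_Z` with all `nᵢ ≥ N`, and let `w_n` be the
part of the weight carried by the balls of level `n`. Because `|F_n| / log n → ∞`, the series
`∑ e^{-δ|F_n|}` converges, so for `N` large `∑_{n ≥ N} e^{-δ|F_n|} < 1 ≤ ∑_n w_n(x)` on `Z`, and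
every `x ∈ Z` lies in some `Z_n = {w_n > e^{-δ|F_n|}}`. Choose `E_n ⊆ Z_n` maximal among sets
meeting every `ε`-Bowen ball of level `n` in at most one point; it is finite by compactness, and by
maximality the `2ε`-Bowen balls around it cover `Z_n`. Counting the weight at the points of `E_n`
gives `|E_n| e^{-δ|F_n|} ≤ ∑_{nᵢ = n} cᵢ`; multiplying by `e^{-s|F_n|}` and summing over `n` bounds
the cost of the cover `{B_{F_n}(z, 2ε) : z ∈ E_n}` at exponent `s + δ` by the weighted sum.
-/

section BowenBall

variable [Group G] [MetricSpace X] [MulAction G X] {F : Finset G} {x y z : X} {r r' : ℝ}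

lemma mem_bowenBall_self (hr : 0 < r) : x ∈ bowenBall F x r := fun g _ => by simpa using hr

lemma mem_bowenBall_comm : y ∈ bowenBall F x r ↔ x ∈ bowenBall F y r := by
  simp only [bowenBall, mem_ofPred_eq, dist_comm]

lemma mem_bowenBall_of_mem_of_mem (hy : y ∈ bowenBall F x r) (hz : z ∈ bowenBall F y r') :
    z ∈ bowenBall F x (r + r') := fun g hg =>
  (dist_triangle _ _ _).trans_lt (add_lt_add (hy g hg) (hz g hg))

lemma mem_bowenBall_two_mul_of_mem_of_mem (hx : x ∈ bowenBall F y r)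
    (hz : z ∈ bowenBall F y r) : x ∈ bowenBall F z (2 * r) :=
  two_mul r ▸ mem_bowenBall_of_mem_of_mem (mem_bowenBall_comm.1 hz) hx

lemma bowenBall_mono (h : r ≤ r') : bowenBall F x r ⊆ bowenBall F x r' :=
  fun _ hy g hg => (hy g hg).trans_le h

lemma isOpen_bowenBall [ContinuousConstSMul G X] (F : Finset G) (x : X) (r : ℝ) :
    IsOpen (bowenBall F x r) := by
  have : bowenBall F x r = ⋂ g ∈ F, (g • ·) ⁻¹' Metric.ball (g • x) r := by
    ext y
    simp [bowenBall, dist_comm]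
  rw [this]
  exact isOpen_biInter_finset fun g _ => Metric.isOpen_ball.preimage (continuous_const_smul g)

end BowenBall

lemma exists_maximal_subsingleton_inter {ι α : Type*} (B : ι → Set α) (W : Set α) :
    ∃ E, Maximal (fun E => E ⊆ W ∧ ∀ i, (B i ∩ E).Subsingleton) E := by
  refine zorn_subset _ fun c hc hchain => ⟨⋃₀ c, ⟨sUnion_subset fun E hE => (hc hE).1, ?_⟩,
    fun E hE => subset_sUnion_of_mem hE⟩
  rintro i z ⟨hz, E₁, hE₁, hzE₁⟩ z' ⟨hz', E₂, hE₂, hz'E₂⟩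
  rcases hchain.total hE₁ hE₂ with h | h
  · exact (hc hE₂).2 i ⟨hz, h hzE₁⟩ ⟨hz', hz'E₂⟩
  · exact (hc hE₁).2 i ⟨hz, hzE₁⟩ ⟨hz', h hz'E₂⟩

section BowenNet

variable [Group G] [MetricSpace X] [CompactSpace X] [MulAction G X] [ContinuousConstSMul G X]
  {F : Finset G} {r : ℝ}

lemma finite_of_subsingleton_inter_bowenBall {E : Set X} (hr : 0 < r)
    (hE : ∀ y, (bowenBall F y r ∩ E).Subsingleton) : E.Finite := by
  obtain ⟨T, hT⟩ := isCompact_univ.elim_finite_subcover (fun y : X => bowenBall F y r)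
    (fun y => isOpen_bowenBall F y r) fun y _ => mem_iUnion.2 ⟨y, mem_bowenBall_self hr⟩
  refine (T.finite_toSet.biUnion fun y _ => (hE y).finite).subset fun z hz => ?_
  obtain ⟨y, hyT, hzy⟩ := mem_iUnion₂.1 (hT (mem_univ z))
  exact mem_biUnion hyT ⟨hzy, hz⟩

lemma exists_bowen_net (F : Finset G) (hr : 0 < r) (W : Set X) :
    ∃ E : Finset X, ↑E ⊆ W ∧ (∀ y, (bowenBall F y r ∩ (E : Set X)).Subsingleton) ∧
      W ⊆ ⋃ z ∈ E, bowenBall F z (2 * r) := by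
  obtain ⟨E, hmax⟩ := exists_maximal_subsingleton_inter (fun y => bowenBall F y r) W
  obtain ⟨hEW, hE⟩ := hmax.prop
  lift E to Finset X using finite_of_subsingleton_inter_bowenBall hr hE
  refine ⟨E, hEW, hE, fun x hx => ?_⟩
  by_contra hfar
  have hins : insert x (E : Set X) ⊆ W ∧ ∀ y, (bowenBall F y r ∩ insert x ↑E).Subsingleton := by
    refine ⟨insert_subset hx hEW, fun y => ?_⟩
    rintro z ⟨hz, rfl | hzE⟩ z' ⟨hz', rfl | hz'E⟩
    · rfl
    · exact (hfar (mem_biUnion hz'E (mem_bowenBall_two_mul_of_mem_of_mem hz hz'))).elim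
    · exact (hfar (mem_biUnion hzE (mem_bowenBall_two_mul_of_mem_of_mem hz' hz))).elim
    · exact hE y ⟨hz, hzE⟩ ⟨hz', hz'E⟩
  exact hfar (mem_biUnion (hmax.mem_of_prop_insert hins) (mem_bowenBall_self (by positivity)))

end BowenNet

lemma Finset.sum_tsum_mul_indicator_le_tsum {ι α : Type*} (E : Finset α) (B : ι → Set α)
    (hB : ∀ i, (B i ∩ E).Subsingleton) (c : ι → ℝ≥0∞) :
    ∑ z ∈ E, ∑' i, c i * (B i).indicator (fun _ => 1) z ≤ ∑' i, c i := by
  classical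
  rw [← Summable.tsum_finsetSum fun _ _ => ENNReal.summable]
  refine ENNReal.tsum_le_tsum fun i => ?_
  rw [← Finset.mul_sum]
  refine mul_le_of_le_one_right' ?_
  rw [Finset.sum_indicator_eq_sum_filter]
  simp only [Finset.sum_const, nsmul_eq_mul, mul_one, Nat.cast_le_one]
  exact Finset.card_le_one.2 fun a ha b hb =>
    hB i ⟨(Finset.mem_filter.1 ha).2, (Finset.mem_filter.1 ha).1⟩
      ⟨(Finset.mem_filter.1 hb).2, (Finset.mem_filter.1 hb).1⟩

lemma ENNReal.tsum_subtype_eq_tsum_tsum_indicator {α β : Type*} (I : Set (α × β))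
    (f : α × β → ℝ≥0∞) : ∑' p : I, f p = ∑' b, ∑' a, I.indicator f (a, b) := by
  rw [tsum_subtype, ENNReal.tsum_prod', ENNReal.tsum_comm]

section CoverSums

variable [Group G] [MetricSpace X] [MulAction G X] {F : ℕ → Finset G} {Z : Set X} {N : ℕ}
  {r r' s : ℝ}

lemma ballM_le_ballM_of_radius_le (h : r ≤ r') : ballM F Z N r' s ≤ ballM F Z N r s :=
  iInf_mono fun _ => iInf_mono fun _ => iInf_mono fun _ => iInf_mono' fun hZ =>
    ⟨hZ.trans (biUnion_mono subset_rfl fun _ _ => bowenBall_mono h), le_rfl⟩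

lemma ballM_le_tsum_card (E : ℕ → Finset X) (hE : ∀ n < N, E n = ∅)
    (hZ : Z ⊆ ⋃ n, ⋃ z ∈ E n, bowenBall (F n) z r) :
    ballM F Z N r s ≤ ∑' n, (E n).card * ENNReal.ofReal (Real.exp (-s * (F n).card)) := by
  set I : Set (X × ℕ) := {p | p.1 ∈ E p.2}
  have hI : I = ⋃ n, (E n : Set X) ×ˢ {n} := by
    ext ⟨x, n⟩
    simp [I]
  have hcount : I.Countable := hI ▸
    countable_iUnion fun n => (E n).finite_toSet.countable.prod (countable_singleton n)
  have hN : ∀ p ∈ I, N ≤ p.2 := fun p hp => by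
    by_contra h
    simp [I, hE p.2 (not_le.1 h)] at hp
  have hcov : Z ⊆ ⋃ p ∈ I, bowenBall (F p.2) p.1 r := fun x hx => by
    obtain ⟨n, z, hz, hxz⟩ : ∃ n, ∃ z ∈ E n, x ∈ bowenBall (F n) z r := by
      simpa using hZ hx
    exact mem_biUnion (show (z, n) ∈ I from hz) hxz
  refine (iInf₂_le I hcount).trans ((iInf₂_le hN hcov).trans_eq ?_)
  rw [ENNReal.tsum_subtype_eq_tsum_tsum_indicator I
    fun p => ENNReal.ofReal (Real.exp (-s * (F p.2).card))]
  refine tsum_congr fun n => ?_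
  calc _ = ∑' x, (E n : Set X).indicator (fun _ => ENNReal.ofReal (Real.exp (-s * (F n).card))) x :=
        tsum_congr fun x => by by_cases hx : x ∈ E n <;> simp [I, hx]
    _ = _ := by
      rw [← tsum_subtype, Finset.tsum_subtype' (E n) fun _ => _, Finset.sum_const, nsmul_eq_mul]

end CoverSums

lemma summable_exp_neg_mul_of_tendsto_div_log {u : ℕ → ℝ}
    (hu : Tendsto (fun n => u n / Real.log n) atTop atTop) {δ : ℝ} (hδ : 0 < δ) :
    Summable fun n => Real.exp (-δ * u n) := by
  refine (Real.summable_nat_pow_inv.2 one_lt_two).of_norm_bounded_eventually_nat ?_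
  filter_upwards [hu.eventually_ge_atTop (2 / δ), eventually_gt_atTop 1] with n hn hn1
  have hlog : 0 < Real.log n := Real.log_pos (by exact_mod_cast hn1)
  rw [le_div_iff₀ hlog, div_mul_eq_mul_div, div_le_iff₀ hδ] at hn
  rw [Real.norm_eq_abs, abs_of_pos (Real.exp_pos _)]
  calc Real.exp (-δ * u n) ≤ Real.exp (-(2 * Real.log n)) := Real.exp_le_exp.2 (by linarith)
    _ = ((n : ℝ) ^ 2)⁻¹ := by
      rw [Real.exp_neg, show 2 * Real.log n = Real.log (n ^ 2) by simp [Real.log_pow],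
        Real.exp_log (by positivity)]

lemma ballM_le_wtWset_of_tsum_lt_one [Group G] [MetricSpace X] [CompactSpace X] [MulAction G X]
    [ContinuousConstSMul G X] (F : ℕ → Finset G) (Z : Set X) (N : ℕ) {ε : ℝ} (hε : 0 < ε)
    (s δ : ℝ) (hδN : ∑' k, ENNReal.ofReal (Real.exp (-δ * (F (k + N)).card)) < 1) :
    ballM F Z N (2 * ε) (s + δ) ≤ wtWset F Z N ε s := by
  refine le_iInf fun I => le_iInf fun c => le_iInf fun _ => le_iInf fun hI =>
    le_iInf fun hcov => ?_
  set e : ℝ → ℕ → ℝ≥0∞ := fun a n => ENNReal.ofReal (Real.exp (-a * (F n).card))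
  set w : ℕ → X → ℝ≥0∞ := fun n x =>
    ∑' y, I.indicator c (y, n) * (bowenBall (F n) y ε).indicator (fun _ => 1) x
  have hw_lt : ∀ n < N, ∀ x, w n x = 0 := fun n hn x => ENNReal.tsum_eq_zero.2 fun y => by
    rw [indicator_of_notMem fun hy => (hI _ hy).1.not_gt hn, zero_mul]
  have hw_one : ∀ x ∈ Z, 1 ≤ ∑' n, w n x := fun x hx => by
    have := hcov x
    rw [indicator_of_mem hx, ENNReal.tsum_subtype_eq_tsum_tsum_indicator I
      fun p => c p * (bowenBall (F p.2) p.1 ε).indicator (fun _ => 1) x] at this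
    simpa only [indicator_mul_left] using this
  have hlevel : ∀ x ∈ Z, ∃ n, e δ n < w n x := fun x hx => by
    by_contra! h
    have hshift : ∑' n, w n x = ∑' k, w (k + N) x := by
      rw [← Summable.sum_add_tsum_nat_add' (f := fun n => w n x) (k := N) ENNReal.summable,
        Finset.sum_eq_zero fun n hn => hw_lt n (Finset.mem_range.1 hn) x, zero_add]
    exact (hw_one x hx).not_gt
      ((hshift.trans_le (ENNReal.tsum_le_tsum fun k => h (k + N))).trans_lt hδN)
  choose E hEZ hEsep hEcov using fun n => exists_bowen_net (F n) hε {x ∈ Z | e δ n < w n x}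
  have hE : ∀ n < N, E n = ∅ := fun n hn => Finset.eq_empty_of_forall_notMem fun x hx => by
    simpa [hw_lt n hn x] using (hEZ n hx).2
  have hZ : Z ⊆ ⋃ n, ⋃ z ∈ E n, bowenBall (F n) z (2 * ε) := fun x hx => by
    obtain ⟨n, hn⟩ := hlevel x hx
    exact mem_iUnion.2 ⟨n, hEcov n ⟨hx, hn⟩⟩
  calc ballM F Z N (2 * ε) (s + δ) ≤ ∑' n, (E n).card * e (s + δ) n := ballM_le_tsum_card E hE hZ
    _ ≤ ∑' n, (∑' y, I.indicator c (y, n)) * e s n := ENNReal.tsum_le_tsum fun n => ?_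
    _ = ∑' p : I, c p * e s (p : X × ℕ).2 := by
      rw [ENNReal.tsum_subtype_eq_tsum_tsum_indicator I fun p => c p * e s p.2]
      simp only [indicator_mul_left, ENNReal.tsum_mul_right]
  calc (E n).card * e (s + δ) n = (E n).card * e δ n * e s n := by
        simp only [e, mul_assoc, ← ENNReal.ofReal_mul (Real.exp_pos _).le, ← Real.exp_add]
        ring_nf
    _ ≤ (∑ z ∈ E n, w n z) * e s n := by
        gcongr
        rw [← nsmul_eq_mul]
        exact Finset.card_nsmul_le_sum _ _ _ fun z hz => (hEZ n hz).2.le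
    _ ≤ (∑' y, I.indicator c (y, n)) * e s n := by
        gcongr
        exact Finset.sum_tsum_mul_indicator_le_tsum _ _ (hEsep n) _

theorem ballM_le_wtWset_general
    [Group G] [MetricSpace X] [CompactSpace X]
    [MulAction G X] [ContinuousConstSMul G X]
    (F : ℕ → Finset G) (hGrow : GrowthCond F)
    (Z : Set X) (s ε δ : ℝ) (hε : 0 < ε) (hδ : 0 < δ) :
    ∃ N₀ : ℕ, ∀ N ≥ N₀, ballM F Z N (6 * ε) (s + δ) ≤ wtWset F Z N ε s := by
  have hsum : ∑' n, ENNReal.ofReal (Real.exp (-δ * (F n).card)) ≠ ∞ := by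
    rw [← ENNReal.ofReal_tsum_of_nonneg (fun _ => (Real.exp_pos _).le)
      (summable_exp_neg_mul_of_tendsto_div_log hGrow hδ)]
    exact ENNReal.ofReal_ne_top
  obtain ⟨N₀, hN₀⟩ := eventually_atTop.1
    ((ENNReal.tendsto_sum_nat_add _ hsum).eventually (gt_mem_nhds one_pos))
  exact ⟨N₀, fun N hN => (ballM_le_ballM_of_radius_le (by linarith)).trans
    (ballM_le_wtWset_of_tsum_lt_one F Z N hε s δ (hN₀ N hN))⟩

/-- If `lim_n |F_n|/log n = ∞` then for any `Z ⊆ X` and any `s, ε, δ > 0`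
there is `N₀` such that for all `N ≥ N₀`, `M(Z,N,6ε,s+δ,{F_n}) ≤ W(Z,N,ε,s,{F_n})`. -/
theorem ballM_le_wtWset
    [Group G] [Countable G] [MetricSpace X] [CompactSpace X]
    [MulAction G X] [ContinuousConstSMul G X]
    (F : ℕ → Finset G) (hGrow : GrowthCond F)
    (Z : Set X) (s ε δ : ℝ) (hs : 0 < s) (hε : 0 < ε) (hδ : 0 < δ) :
    ∃ N₀ : ℕ, ∀ N ≥ N₀, ballM F Z N (6 * ε) (s + δ) ≤ wtWset F Z N ε s :=
  ballM_le_wtWset_general F hGrow Z s ε δ hε hδ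
end

section
/- Let G be a countable discrete group acting continuously on a compact metric space (X,d) and let {F_n} be a sequence of finite subsets of G satisfying lim_{n→∞} |F_n|/log n = ∞. Then for every Z ⊆ X, the weighted Bowen topological entropy equals the Bowen topological entropy: h^{WB}_top(Z,{F_n}) = h^B_top(Z,{F_n}). -/
open Filter Set MeasureTheory Topology ENNReal Pointwise

variable {G X : Type*}

/-!
`W ≤ M` is immediate (take all weights equal to `1`). Conversely, split an admissible weighted
family with `W(Z,N,ε/3,s) < η` by levels `n`. A greedy selection shows that the points where the
level-`n` weights sum to at least `δₙ = exp(-(t-s)|Fₙ|)` are covered by at most `Tₙ/δₙ` tripled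
balls, `Tₙ` being the total level-`n` weight. Once `∑_{n ≥ N} δₙ < 1`, every point of `Z` lies in
such a set for some `n`, and the cover costs `∑ₙ (Tₙ/δₙ) e^{-t|Fₙ|} = ∑ₙ Tₙ e^{-s|Fₙ|} < η`. The
growth condition makes `δₙ ≤ n⁻²` eventually, so these tails do tend to `0`.
-/

/-- `bowenEnt F Z` and `wtBowenEnt F Z` are, by definition, the critical values of `ballMtot F Z`
and `wtWtot F Z`. -/
noncomputable def criticalValue (φ : ℝ → ℝ≥0∞) : ℝ≥0∞ :=
  ⨅ (s : ℝ) (_ : φ s = 0), ENNReal.ofReal s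

theorem criticalValue_le {φ : ℝ → ℝ≥0∞} {s : ℝ} (h : φ s = 0) :
    criticalValue φ ≤ ENNReal.ofReal s :=
  iInf₂_le s h

theorem criticalValue_mono {φ ψ : ℝ → ℝ≥0∞} (h : ∀ s, φ s ≤ ψ s) :
    criticalValue φ ≤ criticalValue ψ :=
  le_iInf₂ fun s hs => criticalValue_le (le_zero_iff.1 (hs ▸ h s))

theorem criticalValue_le_of_forall_lt {φ ψ : ℝ → ℝ≥0∞}
    (h : ∀ s, ψ s = 0 → ∀ t, s < t → φ t = 0) :
    criticalValue φ ≤ criticalValue ψ := by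
  refine le_iInf₂ fun s hs => ENNReal.le_of_forall_pos_le_add fun η hη _ => ?_
  calc criticalValue φ ≤ ENNReal.ofReal (s + η) :=
        criticalValue_le (h s hs _ (lt_add_of_pos_right s hη))
    _ ≤ ENNReal.ofReal s + η := by
        rw [← ENNReal.ofReal_coe_nnreal]; exact ENNReal.ofReal_add_le

theorem ENNReal.exists_lt_of_tsum_lt_tsum {ι : Type*} {f g : ι → ℝ≥0∞}
    (h : ∑' i, f i < ∑' i, g i) : ∃ i, f i < g i := by
  by_contra! hle
  exact (ENNReal.tsum_le_tsum hle).not_gt h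

theorem ENNReal.tsum_eq_tsum_nat_add {f : ℕ → ℝ≥0∞} {N : ℕ} (hf : ∀ n < N, f n = 0) :
    ∑' n, f n = ∑' k, f (k + N) := by
  rw [← ENNReal.summable.sum_add_tsum_nat_add', Finset.sum_eq_zero fun n hn =>
    hf n (Finset.mem_range.1 hn), zero_add]

theorem exists_finset_cover_of_le_tsum_indicator {ι : Type*} {B B' : ι → Set X}
    (hB : ∀ i j, (B i ∩ B j).Nonempty → B i ⊆ B' j) {δ : ℝ≥0∞} (hδ₀ : δ ≠ 0) (hδ : δ ≠ ⊤)
    {c : ι → ℝ≥0∞} (hc : ∑' i, c i ≠ ⊤) {Z : Set X}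
    (hZ : ∀ z ∈ Z, δ ≤ ∑' i, c i * (B i).indicator (fun _ => 1) z) :
    ∃ J : Finset ι, (J.card : ℝ≥0∞) * δ ≤ ∑' i, c i ∧ Z ⊆ ⋃ j ∈ J, B' j := by
  classical
  obtain ⟨k, hk⟩ := ENNReal.exists_nat_mul_gt hδ₀ hc
  induction k generalizing c Z with
  | zero => simp at hk
  | succ k ih =>
    rcases Z.eq_empty_or_nonempty with rfl | ⟨z, hz⟩
    · exact ⟨∅, by simp, empty_subset _⟩
    obtain ⟨j, hzj⟩ : ∃ j, z ∈ B j := by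
      have : ∑' _ : ι, (0 : ℝ≥0∞) < ∑' i, c i * (B i).indicator (fun _ => 1) z := by
        simpa using (pos_iff_ne_zero.2 hδ₀).trans_le (hZ z hz)
      obtain ⟨j, hj⟩ := ENNReal.exists_lt_of_tsum_lt_tsum this
      exact ⟨j, by_contra fun hzj => by simp [hzj] at hj⟩
    -- remove every ball through `z`; this costs at least `δ` of the total weight
    set c' : ι → ℝ≥0∞ := fun i => if z ∈ B i then 0 else c i
    have hsplit : ∑' i, c' i + δ ≤ ∑' i, c i := by
      calc ∑' i, c' i + δ ≤ ∑' i, c' i + ∑' i, c i * (B i).indicator (fun _ => 1) z :=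
            add_le_add le_rfl (hZ z hz)
        _ = ∑' i, c i := by
            rw [← ENNReal.tsum_add]
            exact tsum_congr fun i => by by_cases h : z ∈ B i <;> simp [c', h]
    have hc' : ∑' i, c' i < k * δ := by
      refine (ENNReal.add_lt_add_iff_right hδ).1 (hsplit.trans_lt ?_)
      simpa [add_mul] using hk
    obtain ⟨J, hJ, hZJ⟩ := ih (ne_top_of_lt hc')
      (Z := {y ∈ Z | δ ≤ ∑' i, c' i * (B i).indicator (fun _ => 1) y}) (fun y hy => hy.2) hc'
    refine ⟨insert j J, ?_, fun y hy => ?_⟩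
    · calc ((insert j J).card : ℝ≥0∞) * δ ≤ J.card * δ + δ := by
            rw [← add_one_mul]; gcongr; exact_mod_cast Finset.card_insert_le j J
        _ ≤ ∑' i, c i := (add_le_add_left hJ δ).trans hsplit
    by_cases hy' : δ ≤ ∑' i, c' i * (B i).indicator (fun _ => 1) y
    · exact biUnion_subset_biUnion_left (Finset.coe_subset.2 (Finset.subset_insert j J))
        (hZJ ⟨hy, hy'⟩)
    obtain ⟨i, hi⟩ := ENNReal.exists_lt_of_tsum_lt_tsum ((not_le.1 hy').trans_le (hZ y hy))
    have hzi : z ∈ B i := by_contra fun h => by simp [c', h] at hi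
    have hyi : y ∈ B i := by_contra fun h => by simp [h] at hi
    exact mem_biUnion (Finset.mem_insert_self j J) (hB i j ⟨z, hzi, hzj⟩ hyi)

theorem GrowthCond.summable_exp_neg_mul_card {F : ℕ → Finset G} (hF : GrowthCond F) {r : ℝ}
    (hr : 0 < r) :
    Summable fun n => Real.exp (-r * (F n).card) := by
  refine Summable.of_norm_bounded_eventually
    (Real.summable_nat_rpow.2 (by norm_num : (-2 : ℝ) < -1)) ?_
  rw [Nat.cofinite_eq_atTop]
  filter_upwards [hF.eventually_ge_atTop (2 / r), eventually_gt_atTop 1] with n hn hn1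
  have hlog : 0 < Real.log n := Real.log_pos (by exact_mod_cast hn1)
  rw [div_le_div_iff₀ hr hlog] at hn
  rw [Real.norm_of_nonneg (Real.exp_nonneg _), Real.rpow_def_of_pos (by positivity),
    Real.exp_le_exp]
  nlinarith

theorem GrowthCond.eventually_tsum_exp_lt_one {F : ℕ → Finset G} (hF : GrowthCond F) {r : ℝ}
    (hr : 0 < r) :
    ∀ᶠ N in atTop, ∑' k, ENNReal.ofReal (Real.exp (-r * (F (k + N)).card)) < 1 := by
  have hfin : ∑' n, ENNReal.ofReal (Real.exp (-r * (F n).card)) ≠ ⊤ := by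
    rw [← ENNReal.ofReal_tsum_of_nonneg (fun _ => Real.exp_nonneg _)
      (hF.summable_exp_neg_mul_card hr)]
    exact ENNReal.ofReal_ne_top
  exact (ENNReal.tendsto_sum_nat_add _ hfin).eventually (gt_mem_nhds one_pos)

section Bowen

variable [Group G] [MetricSpace X] [MulAction G X] {F : ℕ → Finset G} {Z : Set X}

theorem bowenBall_subset_of_inter_nonempty {E : Finset G} {x y : X} {ε : ℝ}
    (h : (bowenBall E x ε ∩ bowenBall E y ε).Nonempty) :
    bowenBall E x ε ⊆ bowenBall E y (3 * ε) := by
  obtain ⟨z, hzx, hzy⟩ := h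
  intro w hw g hg
  have := dist_triangle4 (g • y) (g • z) (g • x) (g • w)
  linarith [hzy g hg, dist_comm (g • x) (g • z) ▸ hzx g hg, hw g hg]

theorem ballM_mono_level {N N' : ℕ} (h : N ≤ N') {ε s : ℝ} :
    ballM F Z N ε s ≤ ballM F Z N' ε s :=
  iInf_mono fun _ => iInf_mono fun _ =>
    iInf_mono' fun hI => ⟨fun p hp => h.trans (hI p hp), le_rfl⟩

theorem wtWset_le_ballM (N : ℕ) (ε s : ℝ) : wtWset F Z N ε s ≤ ballM F Z N ε s := by
  refine le_iInf fun I => le_iInf fun hI => le_iInf fun hN => le_iInf fun hZ => ?_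
  refine iInf_le_of_le I <| iInf_le_of_le (fun _ => 1) <| iInf_le_of_le hI <|
    iInf_le_of_le (fun p hp => ⟨hN p hp, one_pos, one_lt_top⟩) <| iInf_le_of_le ?_ ?_
  · intro x
    by_cases hx : x ∈ Z
    · obtain ⟨p, hp, hxp⟩ := mem_iUnion₂.1 (hZ hx)
      simpa [hx, hxp] using ENNReal.le_tsum (f := fun q : I =>
        (bowenBall (F (q : X × ℕ).2) (q : X × ℕ).1 ε).indicator (fun _ => (1 : ℝ≥0∞)) x) ⟨p, hp⟩
    · simp [hx]
  · simp

theorem wtWtot_le_ballMtot (s : ℝ) : wtWtot F Z s ≤ ballMtot F Z s :=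
  iSup₂_mono fun ε _ => iSup_mono fun N => wtWset_le_ballM N ε s

theorem ballM_le_tsum_card_mul {N : ℕ} {ε t : ℝ} {A : ℕ → Finset X}
    (hA : ∀ n, (A n).Nonempty → N ≤ n) (hZ : Z ⊆ ⋃ n, ⋃ x ∈ A n, bowenBall (F n) x ε) :
    ballM F Z N ε t ≤ ∑' n, (A n).card * ENNReal.ofReal (Real.exp (-t * (F n).card)) := by
  have hI : ∀ p ∈ ⋃ n, (fun x => (x, n)) '' (A n : Set X), p.1 ∈ A p.2 := by
    simp only [mem_iUnion, mem_image]
    rintro _ ⟨n, x, hx, rfl⟩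
    exact hx
  calc ballM F Z N ε t ≤ ∑' p : ⋃ n, (fun x => (x, n)) '' (A n : Set X),
        ENNReal.ofReal (Real.exp (-t * (F p.1.2).card)) := by
        unfold ballM
        refine iInf₂_le_of_le _ (countable_iUnion fun n => ((A n).countable_toSet.image _)) <|
          iInf₂_le_of_le (fun p hp => hA p.2 ⟨p.1, hI p hp⟩) (fun z hz => ?_) le_rfl
        obtain ⟨n, x, hx, hzx⟩ : ∃ n, ∃ x ∈ A n, z ∈ bowenBall (F n) x ε := by
          simpa using hZ hz
        exact mem_biUnion (mem_iUnion.2 ⟨n, x, hx, rfl⟩) hzx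
    _ ≤ ∑' n, ∑' p : (fun x => (x, n)) '' (A n : Set X),
          ENNReal.ofReal (Real.exp (-t * (F p.1.2).card)) :=
        ENNReal.tsum_iUnion_le_tsum
          (fun p : X × ℕ => ENNReal.ofReal (Real.exp (-t * (F p.2).card)))
          fun n => (fun x => (x, n)) '' (A n : Set X)
    _ = ∑' n, (A n).card * ENNReal.ofReal (Real.exp (-t * (F n).card)) := by
        refine tsum_congr fun n => ?_
        rw [tsum_image (fun p : X × ℕ => ENNReal.ofReal (Real.exp (-t * (F p.2).card)))
          (fun x _ y _ h => (Prod.ext_iff.1 h).1), Finset.tsum_subtype' (A n)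
          fun _ => ENNReal.ofReal (Real.exp (-t * (F n).card)), Finset.sum_const, nsmul_eq_mul]

theorem ballM_le_tsum_of_one_le_tsum_levels {N : ℕ} {ε s t : ℝ} {a : ℕ → X → ℝ≥0∞}
    (hδ : ∑' k, ENNReal.ofReal (Real.exp (-(t - s) * (F (k + N)).card)) < 1)
    (ha : ∀ n < N, ∀ y, a n y = 0)
    (hZ : ∀ x ∈ Z, 1 ≤ ∑' n, ∑' y, a n y * (bowenBall (F n) y ε).indicator (fun _ => 1) x) :
    ballM F Z N (3 * ε) t ≤
      ∑' n, (∑' y, a n y) * ENNReal.ofReal (Real.exp (-s * (F n).card)) := by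
  set w : ℝ → ℕ → ℝ≥0∞ := fun r n => ENNReal.ofReal (Real.exp (-r * (F n).card)) with hw
  set S : ℕ → X → ℝ≥0∞ :=
    fun n x => ∑' y, a n y * (bowenBall (F n) y ε).indicator (fun _ => 1) x
  change _ ≤ ∑' n, (∑' y, a n y) * w s n
  rcases eq_or_ne (∑' n, (∑' y, a n y) * w s n) ⊤ with hsum | hsum
  · exact hsum ▸ le_top
  have hw0 : ∀ r n, w r n ≠ 0 := fun r n => (ENNReal.ofReal_pos.2 (Real.exp_pos _)).ne'
  have hwts : ∀ n, w t n = w (t - s) n * w s n := fun n => by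
    simp only [hw, ← ENNReal.ofReal_mul (Real.exp_nonneg _), ← Real.exp_add]
    ring_nf
  have hT : ∀ n, ∑' y, a n y ≠ ⊤ := fun n hn =>
    hsum (ENNReal.tsum_eq_top_of_eq_top ⟨n, by rw [hn, ENNReal.top_mul (hw0 s n)]⟩)
  -- `∑_{n ≥ N} w (t - s) n < 1 ≤ ∑_{n ≥ N} S n x`, as there is no weight below level `N`
  have hlevel : ∀ x ∈ Z, ∃ n, w (t - s) n ≤ S n x := by
    intro x hx
    have hx1 : 1 ≤ ∑' n, S n x := hZ x hx
    rw [ENNReal.tsum_eq_tsum_nat_add fun n hn => by simp [S, ha n hn]] at hx1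
    obtain ⟨k, hk⟩ := ENNReal.exists_lt_of_tsum_lt_tsum (hδ.trans_le hx1)
    exact ⟨k + N, hk.le⟩
  choose A hA hAZ using fun n => exists_finset_cover_of_le_tsum_indicator
    (B := fun y => bowenBall (F n) y ε) (B' := fun y => bowenBall (F n) y (3 * ε))
    (fun _ _ => bowenBall_subset_of_inter_nonempty) (hw0 _ n) ENNReal.ofReal_ne_top (hT n)
    (Z := {x ∈ Z | w (t - s) n ≤ S n x}) fun _ hx => hx.2
  calc ballM F Z N (3 * ε) t ≤ ∑' n, (A n).card * w t n := by
        refine ballM_le_tsum_card_mul (fun n hn => not_lt.1 fun hnN => ?_) fun x hx => ?_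
        · simpa [ha n hnN, hw0, hn.ne_empty] using hA n
        · obtain ⟨n, hn⟩ := hlevel x hx
          exact mem_iUnion.2 ⟨n, hAZ n ⟨hx, hn⟩⟩
    _ ≤ ∑' n, (∑' y, a n y) * w s n := ENNReal.tsum_le_tsum fun n => by
        rw [hwts, ← mul_assoc]
        exact mul_le_mul_left (hA n) _

theorem ballM_le_wtWset_s7 {N : ℕ} {ε s t : ℝ}
    (hδ : ∑' k, ENNReal.ofReal (Real.exp (-(t - s) * (F (k + N)).card)) < 1) :
    ballM F Z N (3 * ε) t ≤ wtWset F Z N ε s := by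
  unfold wtWset wtW
  refine le_iInf fun I => le_iInf fun c => le_iInf fun _ => le_iInf fun hc => le_iInf fun hZ => ?_
  have hlevels : ∀ φ : X × ℕ → ℝ≥0∞,
      ∑' p : I, c p * φ p = ∑' n, ∑' y, I.indicator c (y, n) * φ (y, n) := fun φ => by
    simp only [tsum_subtype I fun p => c p * φ p, ← indicator_mul_left, ENNReal.tsum_prod']
    exact ENNReal.tsum_comm
  rw [hlevels fun p => ENNReal.ofReal (Real.exp (-s * (F p.2).card))]
  simp only [ENNReal.tsum_mul_right]
  refine ballM_le_tsum_of_one_le_tsum_levels hδ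
    (fun n hn y => indicator_of_notMem (fun h => hn.not_ge (hc _ h).1) _) fun x hx => ?_
  simpa only [hlevels fun p => (bowenBall (F p.2) p.1 ε).indicator (fun _ => 1) x,
    indicator_of_mem hx] using hZ x

theorem ballMtot_eq_zero_of_wtWtot_eq_zero (hF : GrowthCond F) {s t : ℝ} (hst : s < t)
    (h : wtWtot F Z s = 0) : ballMtot F Z t = 0 := by
  obtain ⟨N₀, hN₀⟩ := eventually_atTop.1 (hF.eventually_tsum_exp_lt_one (sub_pos.2 hst))
  simp only [wtWtot, wtWN, ballMtot, ballMN, ENNReal.iSup_eq_zero] at h ⊢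
  intro ε hε N
  have hN := ballM_le_wtWset_s7 (Z := Z) (ε := ε / 3) (hN₀ (max N N₀) (le_max_right N N₀))
  rw [mul_div_cancel₀ ε three_ne_zero, h (ε / 3) (by positivity) _] at hN
  exact le_zero_iff.1 ((ballM_mono_level (le_max_left N N₀)).trans hN)

end Bowen

theorem wtBowenEnt_eq_bowenEnt_general
    [Group G] [MetricSpace X]
    [MulAction G X]
    (F : ℕ → Finset G) (hGrow : GrowthCond F) (Z : Set X) :
    wtBowenEnt F Z = bowenEnt F Z :=
  le_antisymm (criticalValue_mono wtWtot_le_ballMtot)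
    (criticalValue_le_of_forall_lt fun _ hs _ hst =>
      ballMtot_eq_zero_of_wtWtot_eq_zero hGrow hst hs)

/-- If `lim_n |F_n|/log n = ∞` then for every `Z ⊆ X` the weighted Bowen
topological entropy equals the Bowen topological entropy:
`h^{WB}_top(Z,{F_n}) = h^B_top(Z,{F_n})`. -/
theorem wtBowenEnt_eq_bowenEnt
    [Group G] [Countable G] [MetricSpace X] [CompactSpace X]
    [MulAction G X] [ContinuousConstSMul G X]
    (F : ℕ → Finset G) (hGrow : GrowthCond F) (Z : Set X) :
    wtBowenEnt F Z = bowenEnt F Z :=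
  wtBowenEnt_eq_bowenEnt_general F hGrow Z
end

section
/- Let G be a countable discrete group acting continuously on a compact metric space (X,d), let {F_n} be a sequence of finite subsets of G with |F_n| → ∞, let K ⊆ X be non-empty and compact, and let μ be a Borel probability measure on X with μ(K) = 1. Then h^B_top(K,{F_n}) ≥ h̲_μ^{loc}({F_n}). -/
open Filter Set MeasureTheory Topology ENNReal Pointwise

variable {G X : Type*}

/-!
Mass distribution principle. Suppose `M(K,s,{F_n}) = 0` and `s ≤ t`. The points of `K` whose
Bowen balls `B_{F_n}(x,ε)`, `n ≥ N`, all have measure at most `e^{-t|F_n|}` form a `μ`-null set: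
a Bowen ball of radius `ε/2` meeting this set at `y` lies inside `B_{F_n}(y,ε)`, so any cover by
such balls bounds its measure by `∑ e^{-s|F_{n_i}|}`, which can be made arbitrarily small.
Countably many of these sets exhaust `{x ∈ K : h̲_μ^{loc}(x,{F_n}) > t}`, so `h̲_μ^{loc} ≤ s`
holds `μ`-a.e., and integrating gives the bound.
-/

lemma measure_le_exp_of_lt_locTerm [MeasurableSpace X] (μ : Measure X) [IsFiniteMeasure μ]
    {B : Set X} {m : ℕ} {t : ℝ} (h : ENNReal.ofReal t < locTerm μ B m) :
    μ B ≤ ENNReal.ofReal (Real.exp (-t * m)) := by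
  unfold locTerm at h
  split_ifs at h with h0
  · simp [h0]
  obtain ⟨ht, hpos⟩ := ENNReal.ofReal_lt_ofReal_iff'.1 h
  have hm : (0 : ℝ) < m := Nat.cast_pos.2 (Nat.pos_of_ne_zero fun hm => by simp [hm] at hpos)
  have hr : 0 < (μ B).toReal := ENNReal.toReal_pos h0 (measure_ne_top μ B)
  rw [← ENNReal.ofReal_toReal (measure_ne_top μ B), ← Real.exp_log hr]
  refine ENNReal.ofReal_le_ofReal (Real.exp_le_exp.2 ?_)
  rw [lt_div_iff₀ hm] at ht
  linarith

section BowenBall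

variable [Group G] [MetricSpace X] [MulAction G X]

lemma bowenBall_mono_s10 (A : Finset G) (x : X) {ε' ε : ℝ} (h : ε' ≤ ε) :
    bowenBall A x ε' ⊆ bowenBall A x ε :=
  fun _ hy g hg => (hy g hg).trans_le h

lemma bowenBall_half_subset {A : Finset G} {x y : X} {ε : ℝ}
    (hy : y ∈ bowenBall A x (ε / 2)) : bowenBall A x (ε / 2) ⊆ bowenBall A y ε :=
  fun z hz g hg =>
  calc dist (g • y) (g • z) ≤ dist (g • x) (g • y) + dist (g • x) (g • z) :=
        dist_triangle_left _ _ _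
    _ < ε / 2 + ε / 2 := add_lt_add (hy g hg) (hz g hg)
    _ = ε := add_halves ε

lemma ballM_le_ballMtot (F : ℕ → Finset G) (Z : Set X) (N : ℕ) {ε : ℝ} (hε : 0 < ε) (s : ℝ) :
    ballM F Z N ε s ≤ ballMtot F Z s :=
  (le_iSup (fun N => ballM F Z N ε s) N).trans
    (le_iSup₂ (f := fun ε (_ : 0 < ε) => ballMN F Z ε s) ε hε)

variable [MeasurableSpace X] (μ : Measure X) (F : ℕ → Finset G)

lemma measure_le_ballM {E Z : Set X} (hEZ : E ⊆ Z) {N : ℕ} {ε s : ℝ}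
    (hE : ∀ x ∈ E, ∀ n ≥ N,
      μ (bowenBall (F n) x ε) ≤ ENNReal.ofReal (Real.exp (-s * (F n).card))) :
    μ E ≤ ballM F Z N (ε / 2) s := by
  refine le_iInf₂ fun I hI => le_iInf₂ fun hIN hcov => ?_
  have : Countable I := hI.to_subtype
  have hEcov : E ⊆ ⋃ p : I, E ∩ bowenBall (F p.1.2) p.1.1 (ε / 2) := fun x hx => by
    obtain ⟨p, hp, hxp⟩ := mem_iUnion₂.1 (hcov (hEZ hx))
    exact mem_iUnion.2 ⟨⟨p, hp⟩, hx, hxp⟩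
  calc μ E ≤ ∑' p : I, μ (E ∩ bowenBall (F p.1.2) p.1.1 (ε / 2)) :=
        (measure_mono hEcov).trans (measure_iUnion_le _)
    _ ≤ _ := ENNReal.tsum_le_tsum fun ⟨p, hp⟩ => by
        rcases (E ∩ bowenBall (F p.2) p.1 (ε / 2)).eq_empty_or_nonempty with h | ⟨y, hyE, hyB⟩
        · simp [h]
        · exact (measure_mono (inter_subset_right.trans (bowenBall_half_subset hyB))).trans
            (hE y hyE p.2 (hIN p hp))

def bowenDecaySet (t ε : ℝ) (N : ℕ) : Set X :=
  {x | ∀ n ≥ N, μ (bowenBall (F n) x ε) ≤ ENNReal.ofReal (Real.exp (-t * (F n).card))}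

lemma measure_inter_bowenDecaySet_eq_zero {K : Set X} {s t ε : ℝ} (hs : ballMtot F K s = 0)
    (hst : s ≤ t) (hε : 0 < ε) (N : ℕ) : μ (K ∩ bowenDecaySet μ F t ε N) = 0 := by
  refine le_antisymm ?_ zero_le
  calc μ (K ∩ bowenDecaySet μ F t ε N) ≤ ballM F K N (ε / 2) s :=
        measure_le_ballM μ F inter_subset_left fun x hx n hn =>
          (hx.2 n hn).trans (ENNReal.ofReal_le_ofReal (Real.exp_le_exp.2 (by gcongr)))
    _ ≤ ballMtot F K s := ballM_le_ballMtot F K N (half_pos hε) s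
    _ = 0 := hs

lemma setOf_lt_lowLocPt_subset [IsFiniteMeasure μ] (t : ℝ) :
    {x | ENNReal.ofReal t < lowLocPt μ F x} ⊆
      ⋃ (m : ℕ) (N : ℕ), bowenDecaySet μ F t (1 / (m + 1)) N := by
  intro x hx
  simp only [mem_ofPred_eq, lowLocPt, lt_iSup_iff] at hx
  obtain ⟨ε, hε, hx⟩ := hx
  obtain ⟨m, hm⟩ := exists_nat_one_div_lt hε
  obtain ⟨N, hN⟩ := eventually_atTop.1 (eventually_lt_of_lt_liminf hx)
  exact mem_iUnion₂.2 ⟨m, N, fun n hn => (measure_mono (bowenBall_mono_s10 _ _ hm.le)).trans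
    (measure_le_exp_of_lt_locTerm μ (hN n hn))⟩

lemma measure_inter_setOf_lt_lowLocPt_eq_zero [IsFiniteMeasure μ] {K : Set X} {s t : ℝ}
    (hs : ballMtot F K s = 0) (hst : s ≤ t) :
    μ (K ∩ {x | ENNReal.ofReal t < lowLocPt μ F x}) = 0 := by
  refine measure_mono_null (inter_subset_inter_right K (setOf_lt_lowLocPt_subset μ F t)) ?_
  simp only [inter_iUnion]
  exact measure_iUnion_null fun m => measure_iUnion_null fun N =>
    measure_inter_bowenDecaySet_eq_zero μ F hs hst (by positivity) N

lemma ae_lowLocPt_le [IsProbabilityMeasure μ] {K : Set X} (hK : MeasurableSet K) (hμK : μ K = 1)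
    {s : ℝ} (hs : ballMtot F K s = 0) : ∀ᵐ x ∂μ, lowLocPt μ F x ≤ ENNReal.ofReal s := by
  have hK_ae : ∀ᵐ x ∂μ, x ∈ K := (ae_mem_iff_measure_eq hK.nullMeasurableSet).2 (by simp [hμK])
  have hle (k : ℕ) :
      ∀ᵐ x ∂μ, x ∈ K → lowLocPt μ F x ≤ ENNReal.ofReal (s + 1 / (k + 1)) := by
    have hst : s ≤ s + 1 / (k + 1) := le_add_of_nonneg_right (by positivity)
    filter_upwards [measure_eq_zero_iff_ae_notMem.1
      (measure_inter_setOf_lt_lowLocPt_eq_zero μ F hs hst)] with x hx hxK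
    simpa [hxK] using hx
  filter_upwards [hK_ae, ae_all_iff.2 hle] with x hxK hx
  refine ge_of_tendsto' (f := fun k : ℕ => ENNReal.ofReal (s + 1 / (k + 1))) (x := atTop)
    (ENNReal.tendsto_ofReal ?_) fun k => hx k hxK
  simpa using tendsto_const_nhds.add (tendsto_one_div_add_atTop_nhds_zero_nat (𝕜 := ℝ))

end BowenBall

theorem lowLocEnt_le_bowenEnt_general
    [Group G] [MetricSpace X]
    [MulAction G X] [MeasurableSpace X] [BorelSpace X]
    (F : ℕ → Finset G)
    (K : Set X) (hKc : IsCompact K)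
    (μ : Measure X) [IsProbabilityMeasure μ] (hμK : μ K = 1) :
    lowLocEnt μ F ≤ bowenEnt F K :=
  le_iInf₂ fun s hs =>
    calc lowLocEnt μ F ≤ ∫⁻ _, ENNReal.ofReal s ∂μ :=
          lintegral_mono_ae (ae_lowLocPt_le μ F hKc.isClosed.measurableSet hμK hs)
      _ = ENNReal.ofReal s := by simp

/-- If `|F_n| → ∞`, `K ⊆ X` is non-empty compact and `μ` is a Borel
probability measure with `μ(K) = 1`, then `h^B_top(K,{F_n}) ≥ h̲_μ^{loc}({F_n})`. -/
theorem lowLocEnt_le_bowenEnt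
    [Group G] [Countable G] [MetricSpace X] [CompactSpace X]
    [MulAction G X] [ContinuousConstSMul G X] [MeasurableSpace X] [BorelSpace X]
    (F : ℕ → Finset G) (hF : Tendsto (fun n => (F n).card) atTop atTop)
    (K : Set X) (hK : K.Nonempty) (hKc : IsCompact K)
    (μ : Measure X) [IsProbabilityMeasure μ] (hμK : μ K = 1) :
    lowLocEnt μ F ≤ bowenEnt F K :=
  lowLocEnt_le_bowenEnt_general F K hKc μ hμK
end
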